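/- Let M = ⟨S; {R_i}_{i∈I}⟩ be a model and G ∈ M. Then there exists a set X of finite sequences of E-terms such that G = X → S, where X → S = {t : (t w̄) ∈ S for every sequence w̄ ∈ X} and (t w̄) denotes the iterated application of t to the elements of w̄. -/

import Mathlib

/-! # The classical propositional natural deduction (λμ-calculus with product and co-product)

Terms:  T ::= x | λx.T | (T E) | ⟨T,T⟩ | ω₁T | ω₂T | μa.T | (a T)
E-terms: E ::= T | π₁ | π₂ | [x.T, x.T]
λ-variables and μ-variables are drawn from two disjoint alphabets (both modelled by ℕ). -/

mutual
inductive Trm : Type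
| var  : ℕ → Trm                 -- λ-variable x
| lam  : ℕ → Trm → Trm           -- λx.t
| app  : Trm → Etrm → Trm        -- (t ε)
| pair : Trm → Trm → Trm         -- ⟨t,u⟩
| inl  : Trm → Trm               -- ω₁ t
| inr  : Trm → Trm               -- ω₂ t
| mu   : ℕ → Trm → Trm           -- μa.t
| mvar : ℕ → Trm → Trm           -- (a t)

inductive Etrm : Type
| tm   : Trm → Etrm              -- a term used as an E-term
| pi1  : Etrm                    -- π₁
| pi2  : Etrm                    -- π₂
| case : ℕ → Trm → ℕ → Trm → Etrm -- [x.u, y.v]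
end

/-- Iterated application `(t w̄)` of a term to a finite sequence of E-terms. -/
def appSeq (t : Trm) (ws : List Etrm) : Trm := ws.foldl Trm.app t

mutual
/-- Substitution `t[x := v]` of a term for a λ-variable (capture-permitting,
    but not substituting bound occurrences). -/
def substT (x : ℕ) (v : Trm) : Trm → Trm
| .var y => if y = x then v else .var y
| .lam y t => if y = x then .lam y t else .lam y (substT x v t)
| .app t e => .app (substT x v t) (substE x v e)
| .pair t u => .pair (substT x v t) (substT x v u)
| .inl t => .inl (substT x v t)
| .inr t => .inr (substT x v t)
| .mu a t => .mu a (substT x v t)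
| .mvar a t => .mvar a (substT x v t)

def substE (x : ℕ) (v : Trm) : Etrm → Etrm
| .tm t => .tm (substT x v t)
| .pi1 => .pi1
| .pi2 => .pi2
| .case y u z w =>
    .case y (if y = x then u else substT x v u) z (if z = x then w else substT x v w)
end

mutual
/-- μ-substitution `t[a :=* ε]` : replace inductively each subterm `(a v)` by `(a (v ε))`. -/
def musubstT (a : ℕ) (e : Etrm) : Trm → Trm
| .var y => .var y
| .lam y t => .lam y (musubstT a e t)
| .app t f => .app (musubstT a e t) (musubstE a e f)
| .pair t u => .pair (musubstT a e t) (musubstT a e u)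
| .inl t => .inl (musubstT a e t)
| .inr t => .inr (musubstT a e t)
| .mu b t => if b = a then .mu b t else .mu b (musubstT a e t)
| .mvar b t => if b = a then .mvar b (.app (musubstT a e t) e) else .mvar b (musubstT a e t)

def musubstE (a : ℕ) (e : Etrm) : Etrm → Etrm
| .tm t => .tm (musubstT a e t)
| .pi1 => .pi1
| .pi2 => .pi2
| .case y u z w => .case y (musubstT a e u) z (musubstT a e w)
end

mutual
/-- The one step reduction `▷`, generated compatibly with all term constructors. -/
inductive RedT : Trm → Trm → Prop
| beta (x : ℕ) (u v : Trm) : RedT (.app (.lam x u) (.tm v)) (substT x v u)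
| proj1 (t₁ t₂ : Trm) : RedT (.app (.pair t₁ t₂) .pi1) t₁
| proj2 (t₁ t₂ : Trm) : RedT (.app (.pair t₁ t₂) .pi2) t₂
| case1 (t : Trm) (x₁ : ℕ) (u₁ : Trm) (x₂ : ℕ) (u₂ : Trm) :
    RedT (.app (.inl t) (.case x₁ u₁ x₂ u₂)) (substT x₁ t u₁)
| case2 (t : Trm) (x₁ : ℕ) (u₁ : Trm) (x₂ : ℕ) (u₂ : Trm) :
    RedT (.app (.inr t) (.case x₁ u₁ x₂ u₂)) (substT x₂ t u₂)
| perm (t : Trm) (x₁ : ℕ) (u₁ : Trm) (x₂ : ℕ) (u₂ : Trm) (e : Etrm) :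
    RedT (.app (.app t (.case x₁ u₁ x₂ u₂)) e)
         (.app t (.case x₁ (.app u₁ e) x₂ (.app u₂ e)))
| mu (a : ℕ) (t : Trm) (e : Etrm) : RedT (.app (.mu a t) e) (.mu a (musubstT a e t))
| lamC (x : ℕ) {t t' : Trm} : RedT t t' → RedT (.lam x t) (.lam x t')
| appL {t t' : Trm} (e : Etrm) : RedT t t' → RedT (.app t e) (.app t' e)
| appR (t : Trm) {e e' : Etrm} : RedE e e' → RedT (.app t e) (.app t e')
| pairL {t t' : Trm} (u : Trm) : RedT t t' → RedT (.pair t u) (.pair t' u)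
| pairR (t : Trm) {u u' : Trm} : RedT u u' → RedT (.pair t u) (.pair t u')
| inlC {t t' : Trm} : RedT t t' → RedT (.inl t) (.inl t')
| inrC {t t' : Trm} : RedT t t' → RedT (.inr t) (.inr t')
| muC (a : ℕ) {t t' : Trm} : RedT t t' → RedT (.mu a t) (.mu a t')
| mvarC (a : ℕ) {t t' : Trm} : RedT t t' → RedT (.mvar a t) (.mvar a t')

inductive RedE : Etrm → Etrm → Prop
| tm {t t' : Trm} : RedT t t' → RedE (.tm t) (.tm t')
| caseL (x₁ : ℕ) {u₁ u₁' : Trm} (x₂ : ℕ) (u₂ : Trm) :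
    RedT u₁ u₁' → RedE (.case x₁ u₁ x₂ u₂) (.case x₁ u₁' x₂ u₂)
| caseR (x₁ : ℕ) (u₁ : Trm) (x₂ : ℕ) {u₂ u₂' : Trm} :
    RedT u₂ u₂' → RedE (.case x₁ u₁ x₂ u₂) (.case x₁ u₁ x₂ u₂')
end

/-- `t ▷* t'` : reflexive transitive closure of the one step reduction. -/
def Reds : Trm → Trm → Prop := Relation.ReflTransGen RedT

mutual
/-- The set of free μ-variables of a term. -/
def muFreeT : Trm → Set ℕ
| .var _ => ∅
| .lam _ t => muFreeT t
| .app t e => muFreeT t ∪ muFreeE e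
| .pair t u => muFreeT t ∪ muFreeT u
| .inl t => muFreeT t
| .inr t => muFreeT t
| .mu a t => muFreeT t \ {a}
| .mvar a t => insert a (muFreeT t)

def muFreeE : Etrm → Set ℕ
| .tm t => muFreeT t
| .pi1 => ∅
| .pi2 => ∅
| .case _ u _ w => muFreeT u ∪ muFreeT w
end

mutual
/-- The set of free λ-variables of a term. -/
def lamFreeT : Trm → Set ℕ
| .var y => {y}
| .lam y t => lamFreeT t \ {y}
| .app t e => lamFreeT t ∪ lamFreeE e
| .pair t u => lamFreeT t ∪ lamFreeT u
| .inl t => lamFreeT t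
| .inr t => lamFreeT t
| .mu _ t => lamFreeT t
| .mvar _ t => lamFreeT t

def lamFreeE : Etrm → Set ℕ
| .tm t => lamFreeT t
| .pi1 => ∅
| .pi2 => ∅
| .case y u z w => (lamFreeT u \ {y}) ∪ (lamFreeT w \ {z})
end

/-- A term is closed when it has no free λ-variable and no free μ-variable. -/
def ClosedT (t : Trm) : Prop := lamFreeT t = ∅ ∧ muFreeT t = ∅

/-! ## Formulas and typing -/

inductive Fml : Type
| var : ℕ → Fml                  -- propositional variable
| bot : Fml                      -- ⊥
| arr : Fml → Fml → Fml          -- A → B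
| and : Fml → Fml → Fml          -- A ∧ B
| or  : Fml → Fml → Fml          -- A ∨ B

/-- `¬A` is defined as `A → ⊥`. -/
def Fml.neg (A : Fml) : Fml := .arr A .bot

/-- A context is a set of declarations, one formula (at most) for each variable. -/
abbrev Ctx := ℕ → Option Fml

def Ctx.empty : Ctx := fun _ => none

/-- `Γ, x : A`. -/
def Ctx.upd (Γ : Ctx) (x : ℕ) (A : Fml) : Ctx := fun y => if y = x then some A else Γ y

/-- The typing judgment `Γ ⊢ t : A ; Δ` of classical propositional natural deduction. -/
inductive Typ : Ctx → Trm → Fml → Ctx → Prop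
| ax {Γ : Ctx} {Δ : Ctx} {x : ℕ} {A : Fml} :
    Γ x = some A → Typ Γ (.var x) A Δ
| arrI {Γ Δ x t A B} :
    Typ (Γ.upd x A) t B Δ → Typ Γ (.lam x t) (.arr A B) Δ
| arrE {Γ Δ u v A B} :
    Typ Γ u (.arr A B) Δ → Typ Γ v A Δ → Typ Γ (.app u (.tm v)) B Δ
| andI {Γ Δ u v A B} :
    Typ Γ u A Δ → Typ Γ v B Δ → Typ Γ (.pair u v) (.and A B) Δ
| andE1 {Γ Δ t A B} :
    Typ Γ t (.and A B) Δ → Typ Γ (.app t .pi1) A Δ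
| andE2 {Γ Δ t A B} :
    Typ Γ t (.and A B) Δ → Typ Γ (.app t .pi2) B Δ
| orI1 {Γ Δ t A B} :
    Typ Γ t A Δ → Typ Γ (.inl t) (.or A B) Δ
| orI2 {Γ Δ t A B} :
    Typ Γ t B Δ → Typ Γ (.inr t) (.or A B) Δ
| orE {Γ Δ t x u y v A B C} :
    Typ Γ t (.or A B) Δ → Typ (Γ.upd x A) u C Δ → Typ (Γ.upd y B) v C Δ →
    Typ Γ (.app t (.case x u y v)) C Δ
| absI {Γ Δ a t A} :
    Δ a = some A → Typ Γ t A Δ → Typ Γ (.mvar a t) .bot Δ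
| absE {Γ Δ a t A} :
    Typ Γ t .bot (Δ.upd a A) → Typ Γ (.mu a t) A Δ

/-! ## The realisability semantics -/

/-- A set of terms `S` is μ-saturated. -/
def MuSaturated (S : Set Trm) : Prop :=
  (∀ u v : Trm, u ∈ S → Reds v u → v ∈ S) ∧
  (∀ (a : ℕ) (t : Trm), t ∈ S → Trm.mu a t ∈ S ∧ Trm.mvar a t ∈ S)

/-- `K → L = {t : (t u) ∈ L for each u ∈ K}`. -/
def arrS (K L : Set Trm) : Set Trm := {t | ∀ u ∈ K, Trm.app t (.tm u) ∈ L}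

/-- `K ∧ L = {t : (t π₁) ∈ K and (t π₂) ∈ L}`. -/
def andS (K L : Set Trm) : Set Trm := {t | Trm.app t .pi1 ∈ K ∧ Trm.app t .pi2 ∈ L}

/-- `K ∨ L` (relative to a μ-saturated set `S`). -/
def orS (S K L : Set Trm) : Set Trm :=
  {t | ∀ (x y : ℕ) (u v : Trm),
      (∀ r ∈ K, substT x r u ∈ S) → (∀ s ∈ L, substT y s v ∈ S) →
      Trm.app t (.case x u y v) ∈ S}

/-- `X → S = {t : (t w̄) ∈ S for all w̄ ∈ X}`, for `X` a set of finite sequences of E-terms. -/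
def seqArr (X : Set (List Etrm)) (S : Set Trm) : Set Trm := {t | ∀ w ∈ X, appSeq t w ∈ S}

/-- Membership in the model `M = ⟨S; {R i}_{i}⟩`: the smallest collection of sets of terms
    containing `S` and the `R i` and closed under the constructors `→`, `∧` and `∨`. -/
inductive InModel {ι : Type} (S : Set Trm) (R : ι → Set Trm) : Set Trm → Prop
| base : InModel S R S
| rel (i : ι) : InModel S R (R i)
| arr {K L : Set Trm} : InModel S R K → InModel S R L → InModel S R (arrS K L)
| and {K L : Set Trm} : InModel S R K → InModel S R L → InModel S R (andS K L)
| or {K L : Set Trm} : InModel S R K → InModel S R L → InModel S R (orS S K L)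

/-- `G^⊥ = ∪ {X : G = X → S}`. -/
def perp (S G : Set Trm) : Set (List Etrm) := {w | ∃ X : Set (List Etrm), G = seqArr X S ∧ w ∈ X}

/-- The extension of an interpretation `I` of the propositional variables to all formulas
    (relative to the μ-saturated set `S` of the model). -/
def interp (S : Set Trm) (I : ℕ → Set Trm) : Fml → Set Trm
| .var p => I p
| .bot => S
| .arr A B => arrS (interp S I A) (interp S I B)
| .and A B => andS (interp S I A) (interp S I B)
| .or A B => orS S (interp S I A) (interp S I B)

/-! ## Simultaneous substitution (for the adequation lemma) -/

mutual
/-- Simultaneous substitution `t[x₁:=u₁,…,xₙ:=uₙ, a₁:=*v̄₁,…,a_m:=*v̄_m]`, given by an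
    assignment `σ` of terms to λ-variables and an assignment `τ` of finite sequences of
    E-terms to μ-variables. -/
def msubstT (σ : ℕ → Option Trm) (τ : ℕ → Option (List Etrm)) : Trm → Trm
| .var y => (σ y).getD (.var y)
| .lam y t => .lam y (msubstT (fun z => if z = y then none else σ z) τ t)
| .app t e => .app (msubstT σ τ t) (msubstE σ τ e)
| .pair t u => .pair (msubstT σ τ t) (msubstT σ τ u)
| .inl t => .inl (msubstT σ τ t)
| .inr t => .inr (msubstT σ τ t)
| .mu b t => .mu b (msubstT σ (fun c => if c = b then none else τ c) t)
| .mvar b t =>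
    match τ b with
    | some w => .mvar b (appSeq (msubstT σ τ t) w)
    | none => .mvar b (msubstT σ τ t)

def msubstE (σ : ℕ → Option Trm) (τ : ℕ → Option (List Etrm)) : Etrm → Etrm
| .tm t => .tm (msubstT σ τ t)
| .pi1 => .pi1
| .pi2 => .pi2
| .case y u z w =>
    .case y (msubstT (fun z' => if z' = y then none else σ z') τ u)
          z (msubstT (fun z' => if z' = z then none else σ z') τ w)
end

/-- The assignment determined by a finite family: `y ↦ c i` if `y = x i`. -/
noncomputable def finAssign {α : Type} {n : ℕ} (x : Fin n → ℕ) (c : Fin n → α) :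
    ℕ → Option α :=
  fun y => if h : ∃ i, x i = y then some (c h.choose) else none

/-! ## Operational behaviour -/

/-- `M_t`: the smallest set of terms containing `t` and closed under `u ↦ μa.u` and
    `u ↦ (a u)`; its elements are written `μ̲.t`. -/
inductive MuCl (t : Trm) : Trm → Prop
| base : MuCl t t
| mu (a : ℕ) {u : Trm} : MuCl t u → MuCl t (.mu a u)
| mvar (a : ℕ) {u : Trm} : MuCl t u → MuCl t (.mvar a u)

/-- `w ▷* μ̲.t` : `w` reduces to some element of `M_t`. -/
def RedToMu (w t : Trm) : Prop := ∃ s, MuCl t s ∧ Reds w s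

theorem appSeq_cons (t : Trm) (e : Etrm) (w : List Etrm) :
    appSeq t (e :: w) = appSeq (.app t e) w := rfl

theorem seqArr_singleton_nil (S : Set Trm) : seqArr {[]} S = S := by
  ext t
  simp [seqArr, appSeq]

theorem seqArr_union (X Y : Set (List Etrm)) (S : Set Trm) :
    seqArr (X ∪ Y) S = seqArr X S ∩ seqArr Y S := by
  ext t
  simp only [seqArr, Set.mem_union, Set.mem_inter_iff, Set.mem_ofPred_eq]
  exact ⟨fun h => ⟨fun w hw => h w (.inl hw), fun w hw => h w (.inr hw)⟩,
    fun h w hw => hw.elim (h.1 w) (h.2 w)⟩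

theorem mem_seqArr_image_cons {t : Trm} {e : Etrm} {X : Set (List Etrm)} {S : Set Trm} :
    t ∈ seqArr ((e :: ·) '' X) S ↔ Trm.app t e ∈ seqArr X S := by
  simp [seqArr, appSeq_cons]

theorem arrS_seqArr (K : Set Trm) (Y : Set (List Etrm)) (S : Set Trm) :
    arrS K (seqArr Y S) = seqArr (Set.image2 (fun u w => .tm u :: w) K Y) S := by
  ext t
  simp only [arrS, seqArr, Set.forall_mem_image2, Set.mem_ofPred_eq, appSeq_cons]

theorem andS_seqArr (X Y : Set (List Etrm)) (S : Set Trm) :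
    andS (seqArr X S) (seqArr Y S) = seqArr ((.pi1 :: ·) '' X ∪ (.pi2 :: ·) '' Y) S := by
  ext t
  rw [seqArr_union, Set.mem_inter_iff, mem_seqArr_image_cons, mem_seqArr_image_cons]
  rfl

theorem orS_eq_seqArr (S K L : Set Trm) :
    orS S K L = seqArr {w | ∃ (x y : ℕ) (u v : Trm), (∀ r ∈ K, substT x r u ∈ S) ∧
      (∀ s ∈ L, substT y s v ∈ S) ∧ w = [.case x u y v]} S := by
  ext t
  simp only [orS, seqArr, Set.mem_ofPred_eq]
  constructor
  · rintro h w ⟨x, y, u, v, hu, hv, rfl⟩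
    exact h x y u v hu hv
  · intro h x y u v hu hv
    exact h _ ⟨x, y, u, v, hu, hv, rfl⟩

/-- Every element `G` of a model `M = ⟨S; {R i}ᵢ⟩` is of the form `X → S` for some set
`X` of finite sequences of E-terms. -/
theorem model_element_eq_seqArr {ι : Type} {S : Set Trm} {R : ι → Set Trm}
    (hS : MuSaturated S) (hR : ∀ i, ∃ X : Set (List Etrm), R i = seqArr X S)
    {G : Set Trm} (hG : InModel S R G) :
    ∃ X : Set (List Etrm), G = seqArr X S := by
  induction hG with
  | base => exact ⟨_, (seqArr_singleton_nil S).symm⟩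
  | rel i => exact hR i
  | @arr K _ _ _ _ ihL =>
    obtain ⟨Y, rfl⟩ := ihL
    exact ⟨_, arrS_seqArr K Y S⟩
  | and _ _ ihK ihL =>
    obtain ⟨X, rfl⟩ := ihK
    obtain ⟨Y, rfl⟩ := ihL
    exact ⟨_, andS_seqArr X Y S⟩
  | @or K L _ _ _ _ => exact ⟨_, orS_eq_seqArr S K L⟩
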